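/- arXiv:2105.07186 — 3 statements merged into one kernel-verified Lean document; each statement's English description precedes it below -/
import Mathlib

section
/- Let R be a commutative ring, let 2 ≤ s ≤ t be integers, let (X_{ij})_{1≤i≤s,1≤j≤t} be an s×t matrix of elements of R, let I_s(X) be the ideal of R generated by all s×s minors of (X_{ij}), and let A = R/I_s(X) with x_{ij} the image of X_{ij}. Let I = LA where L is the ideal of R generated by all the X_{ij}, and let q = QA where Q is the ideal of R generated by the X_{ij} with j−i < 0 or j−i > t−s, together with the elements X_{ij} − X_{i−1,j−1} for 2 ≤ i ≤ s and 0 ≤ j−i ≤ t−s. Then for all j_1,…,j_s ∈ {1,…,s} and k_1,…,k_s ∈ {1,…,t}, either the product x_{j_1,k_1}·x_{j_2,k_2}·⋯·x_{j_s,k_s} lies in q·I^{s−1}, or there exist indices 1 ≤ i_1 < i_2 < ⋯ < i_s ≤ t such that x_{j_1,k_1}·⋯·x_{j_s,k_s} − x_{1,i_1}·x_{2,i_2}·⋯·x_{s,i_s} ∈ q·I^{s−1}. -/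
/-- The ideal of `R` generated by the `s × s` minors of the `s × t` matrix `X`. -/
def minorsIdeal (R : Type*) [CommRing R] {s t : ℕ} (X : Fin s → Fin t → R) : Ideal R :=
  Ideal.span {r | ∃ c : Fin s → Fin t, StrictMono c ∧
    r = Matrix.det (Matrix.of fun i j : Fin s => X i (c j))}

/-- The ideal `L` of `R` generated by all the entries `X i j`. -/
def entriesIdeal (R : Type*) [CommRing R] {s t : ℕ} (X : Fin s → Fin t → R) : Ideal R :=
  Ideal.span {r | ∃ i j, r = X i j}

/-- The ideal `Q` of `R` generated by the `X i j` with `j − i < 0` or `j − i > t − s`,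
together with the differences `X i j − X (i−1) (j−1)` for `i ≥ 1` (second row on) and
`0 ≤ j − i ≤ t − s`.  (Indices here are 0-based, so `i` ranges over `0, …, s−1` and `j`
over `0, …, t−1`; the conditions on `j − i` are the same as for the 1-based indices of
the paper.) -/
def diagIdeal (R : Type*) [CommRing R] {s t : ℕ} (X : Fin s → Fin t → R) : Ideal R :=
  Ideal.span
    ({r | ∃ (i : Fin s) (j : Fin t), ((j : ℕ) < (i : ℕ) ∨ t - s < (j : ℕ) - (i : ℕ)) ∧
        r = X i j} ∪
     {r | ∃ (i : Fin s) (j : Fin t), 1 ≤ (i : ℕ) ∧ (i : ℕ) ≤ (j : ℕ) ∧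
        (j : ℕ) - (i : ℕ) ≤ t - s ∧
        r = X i j - X ⟨(i : ℕ) - 1, Nat.lt_of_le_of_lt (Nat.sub_le _ _) i.isLt⟩
              ⟨(j : ℕ) - 1, Nat.lt_of_le_of_lt (Nat.sub_le _ _) j.isLt⟩})

/-!
The minors play no role: the statement already holds in `R` with `Q L ^ (s - 1)` in place of
`q I ^ (s - 1)`, and is then pushed to `A`. Modulo `Q`, an entry outside the band
`0 ≤ j - i ≤ t - s` vanishes, and an entry inside it only depends on its offset `j - i`
(telescope along the diagonal to the first row). So if some factor is outside the band the
product lies in `Q L ^ (s - 1)`; otherwise, sorting the offsets `d₁ ≤ ⋯ ≤ dₛ`, the product is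
congruent to `∏ᵤ X u (dᵤ + u)`, whose column indices are strictly increasing. A difference of
two products of `s` elements of `L` that agree factorwise modulo `Q` lies in `Q L ^ (s - 1)`.
-/

namespace Ideal

variable {A ι : Type*} [CommRing A] {q I : Ideal A} {S : Finset ι}

theorem prod_mem_pow_card {a : ι → A} (ha : ∀ u ∈ S, a u ∈ I) :
    ∏ u ∈ S, a u ∈ I ^ S.card := by
  simpa using prod_mem_prod (I := fun _ => I) ha

theorem prod_mem_mul_pow_of_mem {a : ι → A} {u : ι} (hu : u ∈ S) (hq : a u ∈ q)
    (hI : ∀ v ∈ S, a v ∈ I) : ∏ v ∈ S, a v ∈ q * I ^ (S.card - 1) := by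
  classical
  rw [← Finset.mul_prod_erase S a hu, ← Finset.card_erase_of_mem hu]
  exact mul_mem_mul hq (prod_mem_pow_card fun v hv => hI v (Finset.mem_of_mem_erase hv))

theorem prod_sub_prod_mem_mul_pow {a b : ι → A} (ha : ∀ u ∈ S, a u ∈ I)
    (hb : ∀ u ∈ S, b u ∈ I) (hab : ∀ u ∈ S, a u - b u ∈ q) :
    ∏ u ∈ S, a u - ∏ u ∈ S, b u ∈ q * I ^ (S.card - 1) := by
  classical
  induction S using Finset.induction_on with
  | empty => simp
  | insert v S hv ih =>
    simp only [Finset.forall_mem_insert] at ha hb hab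
    rw [Finset.prod_insert hv, Finset.prod_insert hv, Finset.card_insert_of_notMem hv,
      Nat.add_sub_cancel]
    have hhead : (a v - b v) * ∏ u ∈ S, a u ∈ q * I ^ S.card :=
      mul_mem_mul hab.1 (prod_mem_pow_card ha.2)
    have htail : b v * (∏ u ∈ S, a u - ∏ u ∈ S, b u) ∈ q * I ^ S.card := by
      rcases S.eq_empty_or_nonempty with rfl | hS
      · simp
      · rw [← Nat.sub_add_cancel hS.card_pos, pow_succ, ← mul_assoc, mul_comm (b v)]
        exact mul_mem_mul (ih ha.2 hb.2 hab.2) hb.1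
    rw [show a v * ∏ u ∈ S, a u - b v * ∏ u ∈ S, b u
        = (a v - b v) * ∏ u ∈ S, a u + b v * (∏ u ∈ S, a u - ∏ u ∈ S, b u) by ring]
    exact add_mem hhead htail

end Ideal

section diagIdeal

variable {R : Type*} [CommRing R] {s t : ℕ} (X : Fin s → Fin t → R)

theorem mem_diagIdeal_of_not_band {i : Fin s} {j : Fin t}
    (h : ¬((i : ℕ) ≤ j ∧ (j : ℕ) - i ≤ t - s)) : X i j ∈ diagIdeal R X :=
  Ideal.subset_span (Or.inl ⟨i, j, by omega, rfl⟩)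

theorem sub_first_row_mem_diagIdeal (i : Fin s) (j : Fin t)
    (h : (i : ℕ) ≤ j ∧ (j : ℕ) - i ≤ t - s) :
    X i j - X ⟨0, i.pos⟩ ⟨j - i, by omega⟩ ∈ diagIdeal R X := by
  obtain ⟨n, hn⟩ : ∃ n, (i : ℕ) = n := ⟨_, rfl⟩
  induction n generalizing i j with
  | zero =>
    rw [show (⟨0, i.pos⟩ : Fin s) = i from Fin.ext hn.symm]
    simp [hn]
  | succ n ih =>
    let i' : Fin s := ⟨i - 1, by omega⟩
    let j' : Fin t := ⟨j - 1, by omega⟩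
    have hstep : X i j - X i' j' ∈ diagIdeal R X :=
      Ideal.subset_span (Or.inr ⟨i, j, by omega, h.1, h.2, rfl⟩)
    have hprev := ih i' j' (by simp only [i', j']; omega) (by simp only [i']; omega)
    have hoffset : (⟨j' - i', by omega⟩ : Fin t) = ⟨j - i, by omega⟩ :=
      Fin.ext (by simp only [i', j']; omega)
    rw [hoffset] at hprev
    simpa using add_mem hstep hprev

theorem sub_mem_diagIdeal_of_sub_eq {i i' : Fin s} {j j' : Fin t}
    (h : (i : ℕ) ≤ j ∧ (j : ℕ) - i ≤ t - s) (h' : (i' : ℕ) ≤ j' ∧ (j' : ℕ) - i' ≤ t - s)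
    (hd : (j : ℕ) - i = j' - i') : X i j - X i' j' ∈ diagIdeal R X := by
  have hfirst :
      X ⟨0, i.pos⟩ ⟨j - i, by omega⟩ = X ⟨0, i'.pos⟩ ⟨j' - i', by omega⟩ := by
    simp only [hd]
  simpa [hfirst] using
    sub_mem (sub_first_row_mem_diagIdeal X i j h) (sub_first_row_mem_diagIdeal X i' j' h')

end diagIdeal

theorem exists_perm_strictMono_add {s t : ℕ} (hst : s ≤ t) (d : Fin s → ℕ)
    (hd : ∀ u, d u ≤ t - s) :
    ∃ (σ : Equiv.Perm (Fin s)) (c : Fin s → Fin t),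
      StrictMono c ∧ ∀ u, (c u : ℕ) = d (σ u) + u := by
  refine ⟨Tuple.sort d, fun u => ⟨d (Tuple.sort d u) + u, ?_⟩, fun u v huv => ?_,
    fun u => rfl⟩
  · have := hd (Tuple.sort d u)
    omega
  · have := Tuple.monotone_sort d huv.le
    exact Fin.mk_lt_mk.mpr (by simp only [Function.comp_apply] at this; omega)

theorem prod_entries_mem_or_sub_mem (R : Type*) [CommRing R] {s t : ℕ} (hst : s ≤ t)
    (X : Fin s → Fin t → R) (jj : Fin s → Fin s) (kk : Fin s → Fin t) :
    ∏ u, X (jj u) (kk u) ∈ diagIdeal R X * entriesIdeal R X ^ (s - 1) ∨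
      ∃ c : Fin s → Fin t, StrictMono c ∧
        ∏ u, X (jj u) (kk u) - ∏ u, X u (c u) ∈ diagIdeal R X * entriesIdeal R X ^ (s - 1) := by
  have hL : ∀ i j, X i j ∈ entriesIdeal R X := fun i j => Ideal.subset_span ⟨i, j, rfl⟩
  have hcard : (Finset.univ : Finset (Fin s)).card - 1 = s - 1 := by simp
  by_cases hband : ∀ u, (jj u : ℕ) ≤ kk u ∧ (kk u : ℕ) - jj u ≤ t - s
  · obtain ⟨σ, c, hc, hcσ⟩ :=
      exists_perm_strictMono_add hst (fun u => kk u - jj u) fun u => (hband u).2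
    refine Or.inr ⟨c, hc, ?_⟩
    rw [← Equiv.prod_comp σ (fun u => X (jj u) (kk u)), ← hcard]
    refine Ideal.prod_sub_prod_mem_mul_pow (fun _ _ => hL _ _) (fun _ _ => hL _ _)
      fun u _ => ?_
    obtain ⟨hle, hoff⟩ := hband (σ u)
    have hcu := hcσ u
    exact sub_mem_diagIdeal_of_sub_eq X ⟨hle, hoff⟩ ⟨by omega, by omega⟩ (by omega)
  · obtain ⟨u, hu⟩ := not_forall.mp hband
    exact Or.inl <| hcard ▸ Ideal.prod_mem_mul_pow_of_mem (Finset.mem_univ u)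
      (mem_diagIdeal_of_not_band X hu) fun _ _ => hL _ _

theorem stmt_7_general
    (R : Type*) [CommRing R] (s t : ℕ) (hst : s ≤ t)
    (X : Fin s → Fin t → R)
    -- x i j is the image of X i j in A = R/I_s(X);
    -- I = LA and q = QA are the images of L and Q in A
    (x : Fin s → Fin t → R ⧸ minorsIdeal R X)
    (hx : ∀ i j, x i j = Ideal.Quotient.mk (minorsIdeal R X) (X i j))
    (I : Ideal (R ⧸ minorsIdeal R X))
    (hI : I = (entriesIdeal R X).map (Ideal.Quotient.mk (minorsIdeal R X)))
    (q : Ideal (R ⧸ minorsIdeal R X))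
    (hq : q = (diagIdeal R X).map (Ideal.Quotient.mk (minorsIdeal R X)))
    (jj : Fin s → Fin s) (kk : Fin s → Fin t) :
    (∏ u : Fin s, x (jj u) (kk u)) ∈ q * I ^ (s - 1) ∨
      ∃ c : Fin s → Fin t, StrictMono c ∧
        (∏ u : Fin s, x (jj u) (kk u)) - (∏ u : Fin s, x u (c u)) ∈ q * I ^ (s - 1) := by
  obtain rfl : x = fun i j => Ideal.Quotient.mk (minorsIdeal R X) (X i j) :=
    funext fun i => funext (hx i)
  subst hI hq
  simp only [← Ideal.map_pow, ← Ideal.map_mul, ← map_prod, ← map_sub]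
  rcases prod_entries_mem_or_sub_mem R hst X jj kk with h | ⟨c, hc, h⟩
  · exact Or.inl (Ideal.mem_map_of_mem _ h)
  · exact Or.inr ⟨c, hc, Ideal.mem_map_of_mem _ h⟩

theorem stmt_7
    (R : Type*) [CommRing R] (s t : ℕ) (hs : 2 ≤ s) (hst : s ≤ t)
    (X : Fin s → Fin t → R)
    -- x i j is the image of X i j in A = R/I_s(X);
    -- I = LA and q = QA are the images of L and Q in A
    (x : Fin s → Fin t → R ⧸ minorsIdeal R X)
    (hx : ∀ i j, x i j = Ideal.Quotient.mk (minorsIdeal R X) (X i j))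
    (I : Ideal (R ⧸ minorsIdeal R X))
    (hI : I = (entriesIdeal R X).map (Ideal.Quotient.mk (minorsIdeal R X)))
    (q : Ideal (R ⧸ minorsIdeal R X))
    (hq : q = (diagIdeal R X).map (Ideal.Quotient.mk (minorsIdeal R X)))
    (jj : Fin s → Fin s) (kk : Fin s → Fin t) :
    (∏ u : Fin s, x (jj u) (kk u)) ∈ q * I ^ (s - 1) ∨
      ∃ c : Fin s → Fin t, StrictMono c ∧
        (∏ u : Fin s, x (jj u) (kk u)) - (∏ u : Fin s, x u (c u)) ∈ q * I ^ (s - 1) :=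
  stmt_7_general R s t hst X x hx I hI q hq jj kk
end

section
/- Let R be a commutative ring, let 2 ≤ s ≤ t be integers, let (X_{ij})_{1≤i≤s,1≤j≤t} be an s×t matrix of elements of R, and set A = R/I_s(X), I = LA, q = QA (with L, Q as specified). Then I^s = q·I^{s−1} as ideals of A. -/
open Finset

namespace Ideal

variable {R : Type*} [CommRing R]

theorem prod_sub_prod_mem_mul_pow_s8 {L Q : Ideal R} :
    ∀ {n : ℕ} {f g : Fin n → R}, (∀ i, f i ∈ L) → (∀ i, g i ∈ L) → (∀ i, f i - g i ∈ Q) →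
      ∏ i, f i - ∏ i, g i ∈ Q * L ^ (n - 1)
  | 0, _, _, _, _, _ => by simp
  | m + 1, f, g, hf, hg, hfg => by
    have hpow : ∏ i : Fin m, f i.succ ∈ L ^ m := by
      simpa using prod_mem_prod (I := fun _ => L) (s := univ) fun (i : Fin m) _ => hf i.succ
    have htail : g 0 * (∏ i : Fin m, f i.succ - ∏ i : Fin m, g i.succ) ∈ Q * L ^ m := by
      have h := mul_mem_mul (hg 0)
        (prod_sub_prod_mem_mul_pow_s8 (fun i => hf i.succ) (fun i => hg i.succ) fun i => hfg i.succ)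
      rw [mul_left_comm, ← pow_succ'] at h
      exact mul_mono_right (pow_le_pow_right (by omega)) h
    rw [Fin.prod_univ_succ, Fin.prod_univ_succ, Nat.add_sub_cancel,
      show f 0 * ∏ i : Fin m, f i.succ - g 0 * ∏ i : Fin m, g i.succ =
        (f 0 - g 0) * ∏ i : Fin m, f i.succ +
          g 0 * (∏ i : Fin m, f i.succ - ∏ i : Fin m, g i.succ) by ring]
    exact add_mem (mul_mem_mul (hfg 0) hpow) htail

theorem det_sub_det_mem_mul_pow {L Q : Ideal R} {n : ℕ} {A B : Matrix (Fin n) (Fin n) R}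
    (hA : ∀ i j, A i j ∈ L) (hB : ∀ i j, B i j ∈ L) (hAB : ∀ i j, A i j - B i j ∈ Q) :
    A.det - B.det ∈ Q * L ^ (n - 1) := by
  rw [Matrix.det_apply', Matrix.det_apply', ← sum_sub_distrib]
  refine _root_.sum_mem fun σ _ => ?_
  rw [← mul_sub]
  exact mul_mem_left _ _ (prod_sub_prod_mem_mul_pow_s8 (fun i => hA _ _) (fun i => hB _ _)
    fun i => hAB _ _)

theorem span_pow_le {S : Set R} {J : Ideal R} {n : ℕ}
    (h : ∀ f : Fin n → R, (∀ i, f i ∈ S) → ∏ i, f i ∈ J) : span S ^ n ≤ J := by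
  rw [span, Submodule.span_pow, Submodule.span_le]
  intro x hx
  obtain ⟨f, rfl⟩ := Set.mem_pow.1 hx
  simpa [List.prod_ofFn] using h (fun i => f i) fun i => (f i).2

end Ideal

theorem StrictMono.sum_sq_sub_lt_sum_sq_sub_perm {n : ℕ} {c : Fin n → ℤ} (hc : StrictMono c)
    {σ : Equiv.Perm (Fin n)} (hσ : σ ≠ 1) :
    ∑ i, (c i - i) ^ 2 < ∑ i, (c i - σ i) ^ 2 := by
  have hmono : Monovary c (fun i : Fin n => (i : ℤ)) := fun i j h =>
    hc.monotone (Fin.le_def.2 (by simp only at h; omega))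
  have hlt : ∑ i, c i * (σ i : ℤ) < ∑ i, c i * (i : ℤ) := by
    refine hmono.sum_mul_comp_perm_lt_sum_mul_iff.2 fun hσmono => hσ ?_
    have : StrictMono σ := fun i j hij =>
      lt_of_le_of_ne (not_lt.1 fun h => (hc hij).not_ge (hσmono (by simpa using h)))
        (σ.injective.ne hij.ne)
    exact Equiv.ext fun i => this.apply_eq
  have hsq : ∑ i, ((σ i : ℕ) : ℤ) ^ 2 = ∑ i : Fin n, ((i : ℕ) : ℤ) ^ 2 :=
    Equiv.sum_comp σ fun i => ((i : ℕ) : ℤ) ^ 2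
  simp only [sub_sq, sum_add_distrib, sum_sub_distrib, mul_assoc, ← mul_sum] at hsq ⊢
  linarith

section Determinantal

variable {R : Type*} [CommRing R] {s t : ℕ} {X : Fin s → Fin t → R}

theorem entry_mem_entriesIdeal (i : Fin s) (j : Fin t) : X i j ∈ entriesIdeal R X :=
  Ideal.subset_span ⟨i, j, rfl⟩

theorem diagIdeal_le_entriesIdeal : diagIdeal R X ≤ entriesIdeal R X := by
  rw [diagIdeal, Ideal.span_le]
  rintro r (⟨i, j, -, rfl⟩ | ⟨i, j, -, -, -, rfl⟩)
  · exact entry_mem_entriesIdeal i j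
  · exact sub_mem (entry_mem_entriesIdeal _ _) (entry_mem_entriesIdeal _ _)

variable [NeZero s]

/-- The entry of the first row on the diagonal `j - i = k` if that diagonal is one of the
`t - s + 1` diagonals of length `s`, and `0` otherwise: modulo `diagIdeal R X`, every
`X i j` is congruent to `diagEntry X (j - i)`. -/
def diagEntry (X : Fin s → Fin t → R) (k : ℤ) : R :=
  if h : 0 ≤ k ∧ k + s ≤ t then X 0 ⟨k.toNat, by have := NeZero.pos s; omega⟩ else 0

theorem diagEntry_mem_entriesIdeal (k : ℤ) : diagEntry X k ∈ entriesIdeal R X := by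
  unfold diagEntry
  split
  · exact entry_mem_entriesIdeal _ _
  · exact zero_mem _

theorem entry_sub_diagEntry_mem (hst : s ≤ t) (i : Fin s) (j : Fin t) :
    X i j - diagEntry X (j - i) ∈ diagIdeal R X := by
  by_cases hout : (j : ℕ) < i ∨ t - s < (j : ℕ) - i
  · rw [diagEntry, dif_neg (by omega), sub_zero]
    exact Ideal.subset_span (Or.inl ⟨i, j, hout, rfl⟩)
  induction hi : (i : ℕ) generalizing i j with
  | zero =>
    rw [diagEntry, dif_pos (by omega)]
    convert zero_mem (diagIdeal R X)
    rw [sub_eq_zero]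
    congr 1
    exact Fin.ext hi
  | succ n ih =>
    have hstep : X i j - X ⟨i - 1, by omega⟩ ⟨j - 1, by omega⟩ ∈ diagIdeal R X :=
      Ideal.subset_span (Or.inr ⟨i, j, by omega, by omega, by omega, rfl⟩)
    have hprev := ih ⟨i - 1, by omega⟩ ⟨j - 1, by omega⟩ (by simp; omega) (by simp; omega)
    convert add_mem hstep hprev using 1
    rw [sub_add_sub_cancel]
    congr 2
    simp
    omega

theorem prod_entry_sub_prod_diagEntry_mem (hst : s ≤ t) (r : Fin s → Fin s)
    (c : Fin s → Fin t) :
    ∏ m, X (r m) (c m) - ∏ m, diagEntry X (c m - r m) ∈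
      diagIdeal R X * entriesIdeal R X ^ (s - 1) :=
  Ideal.prod_sub_prod_mem_mul_pow_s8 (fun _ => entry_mem_entriesIdeal _ _)
    (fun _ => diagEntry_mem_entriesIdeal _) fun m => entry_sub_diagEntry_mem hst (r m) (c m)

theorem det_diagEntry_mem (hst : s ≤ t) {c : Fin s → Fin t} (hc : StrictMono c) :
    (Matrix.of fun i j : Fin s => diagEntry X (c j - i)).det ∈
      minorsIdeal R X ⊔ diagIdeal R X * entriesIdeal R X ^ (s - 1) := by
  have hminor : (Matrix.of fun i j => X i (c j)).det ∈ minorsIdeal R X :=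
    Ideal.subset_span ⟨c, hc, rfl⟩
  have hdiff := Ideal.det_sub_det_mem_mul_pow (L := entriesIdeal R X) (Q := diagIdeal R X)
    (A := Matrix.of fun i j => X i (c j))
    (B := Matrix.of fun i j : Fin s => diagEntry X (c j - i))
    (fun _ _ => entry_mem_entriesIdeal _ _) (fun _ _ => diagEntry_mem_entriesIdeal _)
    fun i j => entry_sub_diagEntry_mem hst i (c j)
  rw [← sub_sub_cancel (Matrix.of fun i j => X i (c j)).det (Matrix.of _).det]
  exact sub_mem (Ideal.mem_sup_left hminor) (Ideal.mem_sup_right hdiff)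

theorem prod_diagEntry_mem_of_monotone (hst : s ≤ t) {k : Fin s → ℤ} (hk : Monotone k)
    (hrange : ∀ m, 0 ≤ k m ∧ k m + s ≤ t)
    (ih : ∀ a : Fin s → ℤ, ∑ m, k m ^ 2 < ∑ m, a m ^ 2 →
      ∏ m, diagEntry X (a m) ∈ minorsIdeal R X ⊔ diagIdeal R X * entriesIdeal R X ^ (s - 1)) :
    ∏ m, diagEntry X (k m) ∈
      minorsIdeal R X ⊔ diagIdeal R X * entriesIdeal R X ^ (s - 1) := by
  let c : Fin s → Fin t := fun j => ⟨(k j + j).toNat, by have := hrange j; omega⟩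
  have hc_val : ∀ j, (c j : ℤ) = k j + j := fun j => by
    simp only [c]; have := hrange j; omega
  have hc : StrictMono c := fun i j hij => by
    have := hk hij.le; have := Fin.lt_def.1 hij
    rw [Fin.lt_def, ← Int.ofNat_lt, hc_val, hc_val]; omega
  have hdet := det_diagEntry_mem (X := X) hst hc
  rw [Matrix.det_apply', ← add_sum_erase _ _ (mem_univ 1)] at hdet
  have hrest : ∑ σ ∈ univ.erase 1, (Equiv.Perm.sign σ : R) *
      ∏ i, Matrix.of (fun i j : Fin s => diagEntry X (c j - i)) (σ i) i ∈
        minorsIdeal R X ⊔ diagIdeal R X * entriesIdeal R X ^ (s - 1) := by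
    refine _root_.sum_mem fun σ hσ => Ideal.mul_mem_left _ _ (ih _ ?_)
    have hlt := StrictMono.sum_sq_sub_lt_sum_sq_sub_perm (c := fun j => (c j : ℤ))
      (fun i j hij => by simpa using hc hij) (ne_of_mem_erase hσ)
    simpa [hc_val] using hlt
  convert sub_mem hdet hrest using 1
  simp [hc_val]

theorem prod_diagEntry_mem (hst : s ≤ t) (a : Fin s → ℤ) :
    ∏ m, diagEntry X (a m) ∈
      minorsIdeal R X ⊔ diagIdeal R X * entriesIdeal R X ^ (s - 1) := by
  by_cases hrange : ∀ m, 0 ≤ a m ∧ a m + s ≤ t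
  · have hsorted : ∏ m, diagEntry X (a (Tuple.sort a m)) = ∏ m, diagEntry X (a m) :=
      Equiv.prod_comp (Tuple.sort a) fun m => diagEntry X (a m)
    rw [← hsorted]
    refine prod_diagEntry_mem_of_monotone hst (Tuple.monotone_sort a)
      (fun m => hrange _) fun a' ha' => prod_diagEntry_mem hst a'
  · obtain ⟨m, hm⟩ := not_forall.1 hrange
    rw [prod_eq_zero (mem_univ m) (by rw [diagEntry, dif_neg (by omega)])]
    exact zero_mem _
termination_by (s * ((t : ℤ) - s) ^ 2 + 1 - ∑ m, a m ^ 2).toNat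
decreasing_by
  have hsq : ∑ m, a (Tuple.sort a m) ^ 2 = ∑ m, a m ^ 2 :=
    Equiv.sum_comp (Tuple.sort a) fun m => a m ^ 2
  have hbound : ∑ m, a m ^ 2 ≤ s * ((t : ℤ) - s) ^ 2 := by
    simpa using sum_le_sum fun m (_ : m ∈ univ) =>
      pow_le_pow_left₀ (hrange m).1 (show a m ≤ t - s by linarith [hrange m]) 2
  rw [Int.toNat_lt_toNat (by linarith)]
  linarith

theorem entriesIdeal_pow_le (hst : s ≤ t) :
    entriesIdeal R X ^ s ≤ minorsIdeal R X ⊔ diagIdeal R X * entriesIdeal R X ^ (s - 1) := by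
  refine Ideal.span_pow_le fun f hf => ?_
  choose r c hrc using hf
  simp_rw [hrc]
  rw [← sub_add_cancel (∏ m, X (r m) (c m)) (∏ m, diagEntry X (c m - r m))]
  exact add_mem (Ideal.mem_sup_right (prod_entry_sub_prod_diagEntry_mem hst r c))
    (prod_diagEntry_mem hst _)

end Determinantal

theorem stmt_8
    (R : Type*) [CommRing R] (s t : ℕ) (hs : 2 ≤ s) (hst : s ≤ t)
    (X : Fin s → Fin t → R)
    -- I = LA and q = QA are the images of L and Q in A = R/I_s(X)
    (I : Ideal (R ⧸ minorsIdeal R X))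
    (hI : I = (entriesIdeal R X).map (Ideal.Quotient.mk (minorsIdeal R X)))
    (q : Ideal (R ⧸ minorsIdeal R X))
    (hq : q = (diagIdeal R X).map (Ideal.Quotient.mk (minorsIdeal R X))) :
    I ^ s = q * I ^ (s - 1) := by
  have : NeZero s := ⟨by omega⟩
  subst hI hq
  rw [← Ideal.map_pow, ← Ideal.map_pow, ← Ideal.map_mul]
  refine le_antisymm ?_ (Ideal.map_mono ?_)
  · calc (entriesIdeal R X ^ s).map (Ideal.Quotient.mk (minorsIdeal R X))
        ≤ (minorsIdeal R X ⊔ diagIdeal R X * entriesIdeal R X ^ (s - 1)).map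
            (Ideal.Quotient.mk (minorsIdeal R X)) := Ideal.map_mono (entriesIdeal_pow_le hst)
      _ = (diagIdeal R X * entriesIdeal R X ^ (s - 1)).map
            (Ideal.Quotient.mk (minorsIdeal R X)) := by
        rw [Ideal.map_sup, Ideal.map_quotient_self, bot_sup_eq]
  · calc diagIdeal R X * entriesIdeal R X ^ (s - 1)
        ≤ entriesIdeal R X * entriesIdeal R X ^ (s - 1) :=
          Ideal.mul_mono_left diagIdeal_le_entriesIdeal
      _ = entriesIdeal R X ^ s := by rw [← pow_succ', Nat.sub_add_cancel (by omega)]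
end

section
/- Let (R,n) be a Noetherian local ring and let x_1,…,x_m, y_1,…,y_k ∈ n be a regular sequence on R. Set I = (x_1,…,x_m) and J = (y_1,…,y_k). Then I^i ∩ J^j = I^i·J^j for all i, j ≥ 0. -/
/-!
If `ys` lies in the maximal ideal and is weakly regular on `R ⧸ A`, then `A ∩ J^j = A J^j` for
`J = (ys)`. Induct on `ys = w :: ys'`, with `J = (w) + J'`. An element of `A ∩ J^(j+1)` has the
form `w t + s` with `t ∈ J^j` and `s ∈ J'^(j+1)`. The statement for `ys'` and the ideal `A + (w)`
makes `w` regular modulo `A + J'^(j+1)`, so `t = a + s'` with `a ∈ A ∩ J^j` and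
`s' ∈ J'^(j+1)`. Then `w a ∈ A J^(j+1)` by induction on `j`, and `w s' + s ∈ A ∩ J'^(j+1)`
lies in `A J'^(j+1)` by the statement for `ys'`. In a Noetherian local ring regular sequences may
be permuted, which provides both orders `w :: ys'` and `ys' ++ [w]`. The same regularity
argument shows that `y` is regular on `R ⧸ I^i`, and the theorem is the case `A = I^i`.
-/

open RingTheory.Sequence IsLocalRing
open scoped Pointwise

namespace Ideal

variable {R : Type*} [CommRing R]

lemma ofList_ofFn {n : ℕ} (z : Fin n → R) : ofList (List.ofFn z) = span (Set.range z) := by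
  simp only [ofList, List.mem_ofFn]
  rfl

lemma smul_top_quotient_eq_map_span_singleton (A : Ideal R) (r : R) :
    r • (⊤ : Submodule R (R ⧸ A)) = Submodule.map A.mkQ (span {r}) := by
  rw [← Submodule.ideal_span_singleton_smul, ← Submodule.range_mkQ A, LinearMap.range_eq_map,
    ← Submodule.map_smul'', smul_eq_mul, mul_top]

noncomputable def quotSMulTopEquivQuotSup (A : Ideal R) (r : R) :
    QuotSMulTop r (R ⧸ A) ≃ₗ[R] R ⧸ (A ⊔ span {r}) :=
  Submodule.quotEquivOfEq _ _ (smul_top_quotient_eq_map_span_singleton A r) ≪≫ₗ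
    Submodule.quotientQuotientEquivQuotientSup A (span {r})

lemma isWeaklyRegular_quotient_cons_iff (A : Ideal R) (r : R) (rs : List R) :
    IsWeaklyRegular (R ⧸ A) (r :: rs) ↔
      IsSMulRegular (R ⧸ A) r ∧ IsWeaklyRegular (R ⧸ (A ⊔ span {r})) rs := by
  rw [isWeaklyRegular_cons_iff, (quotSMulTopEquivQuotSup A r).isWeaklyRegular_congr]

lemma sup_pow_succ_le (W I : Ideal R) (n : ℕ) :
    (W ⊔ I) ^ (n + 1) ≤ W * (W ⊔ I) ^ n ⊔ I ^ (n + 1) := by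
  induction n with
  | zero => simp
  | succ n ih =>
    calc (W ⊔ I) ^ (n + 2) = W * (W ⊔ I) ^ (n + 1) ⊔ (W ⊔ I) ^ (n + 1) * I := by
          rw [pow_succ, mul_sup, mul_comm]
      _ ≤ W * (W ⊔ I) ^ (n + 1) ⊔ (W * (W ⊔ I) ^ n ⊔ I ^ (n + 1)) * I :=
          sup_le_sup_left (mul_mono_left ih) _
      _ ≤ W * (W ⊔ I) ^ (n + 1) ⊔ I ^ (n + 2) := by
          rw [sup_mul, mul_assoc, ← pow_succ, ← sup_assoc]
          refine sup_le_sup_right (sup_le le_rfl (mul_mono_right ?_)) _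
          rw [pow_succ]
          exact mul_mono_right le_sup_right

lemma isSMulRegular_quotient_sup {A B : Ideal R} {r : R} (hr : IsSMulRegular (R ⧸ A) r)
    (hB : (A ⊔ span {r}) ⊓ B ≤ (A ⊔ span {r}) * B) : IsSMulRegular (R ⧸ (A ⊔ B)) r := by
  rw [isSMulRegular_quotient_iff_mem_of_smul_mem] at hr ⊢
  intro c hc
  obtain ⟨a, ha, b, hb, hab⟩ := Submodule.mem_sup.1 hc
  have hbB : b ∈ (A ⊔ span {r}) * B := by
    refine hB ⟨?_, hb⟩
    rw [show b = r * c - a by rw [← smul_eq_mul, ← hab]; ring]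
    exact sub_mem (Submodule.mem_sup_right (mul_mem_right c _ (mem_span_singleton_self r)))
      (Submodule.mem_sup_left ha)
  rw [sup_mul] at hbB
  obtain ⟨a', ha', b', hb', rfl⟩ := Submodule.mem_sup.1 hbB
  obtain ⟨z, hz, rfl⟩ := mem_span_singleton_mul.1 hb'
  have hcz : c - z ∈ A := hr _ <| by
    rw [show r • (c - z) = a + a' by rw [smul_sub, ← hab, smul_eq_mul]; ring]
    exact add_mem ha (mul_le_left ha')
  rw [show c = (c - z) + z by ring]
  exact add_mem (Submodule.mem_sup_left hcz) (Submodule.mem_sup_right hz)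

lemma inf_span_singleton_sup_pow_le {A J : Ideal R} {w : R}
    (hJ : ∀ t, A ⊓ J ^ t ≤ A * J ^ t) (hw : ∀ t, IsSMulRegular (R ⧸ (A ⊔ J ^ t)) w) (j : ℕ) :
    A ⊓ (span {w} ⊔ J) ^ j ≤ A * (span {w} ⊔ J) ^ j := by
  set K := span {w} ⊔ J
  induction j with
  | zero => simp
  | succ j ih =>
    rintro r ⟨hrA, hrK⟩
    obtain ⟨u, hu, s, hs, rfl⟩ := Submodule.mem_sup.1 (sup_pow_succ_le _ _ j hrK)
    obtain ⟨t, ht, rfl⟩ := mem_span_singleton_mul.1 hu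
    have hwt : w • t ∈ A ⊔ J ^ (j + 1) := by
      rw [smul_eq_mul, show w * t = w * t + s - s by ring]
      exact sub_mem (Submodule.mem_sup_left hrA) (Submodule.mem_sup_right hs)
    obtain ⟨a, ha, s', hs', rfl⟩ :=
      Submodule.mem_sup.1 (mem_of_isSMulRegular_quotient_of_smul_mem (hw (j + 1)) hwt)
    have hJK : J ^ (j + 1) ≤ K ^ (j + 1) := pow_right_mono le_sup_right _
    have haK : a ∈ A * K ^ j := ih ⟨ha, by
      simpa using sub_mem ht (pow_le_pow_right j.le_succ (hJK hs'))⟩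
    have hrest : w * s' + s ∈ A * J ^ (j + 1) := hJ _ ⟨by
      simpa [mul_add, add_assoc] using sub_mem hrA (A.mul_mem_left w ha),
      add_mem (mul_mem_left _ _ hs') hs⟩
    have hwa : w * a ∈ A * K ^ (j + 1) := by
      rw [pow_succ, ← mul_assoc, mul_comm w a]
      exact mul_mem_mul haK (mem_sup_left (mem_span_singleton_self w))
    rw [show w * (a + s') + s = w * a + (w * s' + s) by ring]
    exact add_mem hwa (mul_mono_right hJK hrest)

variable [IsNoetherianRing R] [IsLocalRing R]

lemma inf_ofList_pow_eq_mul {rs : List R} (hrs : ∀ r ∈ rs, r ∈ maximalIdeal R) {A : Ideal R}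
    (h : IsWeaklyRegular (R ⧸ A) rs) (j : ℕ) : A ⊓ ofList rs ^ j = A * ofList rs ^ j := by
  refine le_antisymm ?_ mul_le_inf
  induction rs generalizing A j with
  | nil => rcases j with _ | j <;> simp
  | cons w rs ih =>
    obtain ⟨hw, hrest⟩ := (isWeaklyRegular_quotient_cons_iff A w rs).1 h
    have hrsA : IsWeaklyRegular (R ⧸ A) rs :=
      ((isWeaklyRegular_append_iff _ rs [w]).1 <|
        isWeaklyRegular_of_perm_of_subset_maximalIdeal h (List.perm_append_singleton w rs).symm
          hrs).1
    have hrs' := (List.forall_mem_cons.1 hrs).2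
    rw [ofList_cons]
    exact inf_span_singleton_sup_pow_le (ih hrs' hrsA)
      (fun t => isSMulRegular_quotient_sup hw (ih hrs' hrest t)) j

lemma isWeaklyRegular_quotient_sup_ofList_pow {rs₁ rs₂ : List R}
    (h₁ : ∀ r ∈ rs₁, r ∈ maximalIdeal R) (h₂ : ∀ r ∈ rs₂, r ∈ maximalIdeal R) {A : Ideal R}
    (h : IsWeaklyRegular (R ⧸ A) (rs₁ ++ rs₂)) (i : ℕ) :
    IsWeaklyRegular (R ⧸ (A ⊔ ofList rs₁ ^ i)) rs₂ := by
  induction rs₂ generalizing A with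
  | nil => exact .nil R _
  | cons w rs₂ ih =>
    obtain ⟨hw, hrest⟩ := (isWeaklyRegular_quotient_cons_iff A w _).1 <|
      isWeaklyRegular_of_perm_of_subset_maximalIdeal h List.perm_middle
        (List.forall_mem_append.2 ⟨h₁, h₂⟩)
    have hrs₁ := ((isWeaklyRegular_append_iff _ rs₁ rs₂).1 hrest).1
    rw [isWeaklyRegular_quotient_cons_iff, sup_right_comm]
    exact ⟨isSMulRegular_quotient_sup hw (inf_ofList_pow_eq_mul h₁ hrs₁ i).le,
      ih (List.forall_mem_cons.1 h₂).2 hrest⟩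

end Ideal

open Ideal in
theorem stmt_13
    (R : Type*) [CommRing R] [IsNoetherianRing R] [IsLocalRing R]
    (m k : ℕ) (x : Fin m → R) (y : Fin k → R)
    -- x₁, …, x_m, y₁, …, y_k lie in the maximal ideal and form a regular sequence on R
    (hx : ∀ u, x u ∈ IsLocalRing.maximalIdeal R)
    (hy : ∀ u, y u ∈ IsLocalRing.maximalIdeal R)
    (hreg : RingTheory.Sequence.IsRegular R (List.ofFn x ++ List.ofFn y)) :
    ∀ i j : ℕ,
      Ideal.span (Set.range x) ^ i ⊓ Ideal.span (Set.range y) ^ j =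
        Ideal.span (Set.range x) ^ i * Ideal.span (Set.range y) ^ j := by
  intro i j
  have hx' := List.forall_mem_ofFn_iff.2 hx
  have hy' := List.forall_mem_ofFn_iff.2 hy
  have hxy : IsWeaklyRegular (R ⧸ (⊥ : Ideal R)) (List.ofFn x ++ List.ofFn y) :=
    ((Submodule.quotEquivOfEqBot ⊥ rfl).symm.isWeaklyRegular_congr _).1 hreg.toIsWeaklyRegular
  have hyI := isWeaklyRegular_quotient_sup_ofList_pow hx' hy' hxy i
  rw [bot_sup_eq] at hyI
  rw [← ofList_ofFn, ← ofList_ofFn]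
  exact inf_ofList_pow_eq_mul hy' hyI j
end
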